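/- arXiv:2502.20917 — 4 statements merged into one kernel-verified Lean document; each statement's English description precedes it below -/
import Mathlib

section
/- For every critical value c and every a > c, the map θ ↦ F(a; θ, c) is strictly decreasing on ℝ; that is, if θ₁ < θ₂ then F(a; θ₁, c) > F(a; θ₂, c). -/
/-- The standard normal CDF `Φ(t) = (2π)^{−1/2} ∫_{−∞}^t exp(−s²/2) ds`. -/
noncomputable def Phi (t : ℝ) : ℝ :=
  (Real.sqrt (2 * Real.pi))⁻¹ * ∫ s in Set.Iic t, Real.exp (-(s ^ 2) / 2)

/-- The truncated-normal distribution function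
    `F(a; θ, c) := (Φ(a − θ) − Φ(c − θ)) / (1 − Φ(c − θ))`. -/
noncomputable def F (a θ c : ℝ) : ℝ :=
  (Phi (a - θ) - Phi (c - θ)) / (1 - Phi (c - θ))

/-!
With `f(s) = e^{-s²/2}` and its tail `T(x) = ∫_x^∞ f`, we have
`F(a; θ, c) = 1 - T(c - θ + d) / T(c - θ)` for `d = a - c > 0`, so it suffices that
`x ↦ T(x + d) / T(x)` is strictly decreasing. Its derivative has the sign of
`f(x) T(x + d) - f(x + d) T(x) = ∫_x^∞ (f(x) f(t + d) - f(x + d) f(t)) dt`, which is negative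
because `f(t + d) / f(t)` is strictly decreasing in `t`, i.e. `f` is strictly log-concave.
-/

open MeasureTheory Set Real

lemma setIntegral_Ioi_pos {g : ℝ → ℝ} {x : ℝ} (hg : IntegrableOn g (Ioi x))
    (hpos : ∀ t ∈ Ioi x, 0 < g t) : 0 < ∫ t in Ioi x, g t := by
  rw [setIntegral_pos_iff_support_of_nonneg_ae _ hg]
  · have hsupp : Function.support g ∩ Ioi x = Ioi x :=
      inter_eq_right.mpr fun t ht => (hpos t ht).ne'
    simp [hsupp]
  · filter_upwards [self_mem_ae_restrict measurableSet_Ioi] with t ht using (hpos t ht).le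

noncomputable def upperTail (f : ℝ → ℝ) (x : ℝ) : ℝ := ∫ s in Ioi x, f s

section

variable {f : ℝ → ℝ}

lemma upperTail_pos (hf : Integrable f) (hpos : ∀ s, 0 < f s) (x : ℝ) : 0 < upperTail f x :=
  setIntegral_Ioi_pos hf.integrableOn fun s _ => hpos s

lemma hasDerivAt_upperTail (hf : Integrable f) (hcont : Continuous f) (x : ℝ) :
    HasDerivAt (upperTail f) (-f x) x := by
  have hsplit : upperTail f = fun u => upperTail f 0 - ∫ s in (0 : ℝ)..u, f s := by
    ext u
    rw [upperTail, upperTail,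
      ← intervalIntegral.integral_Ioi_sub_Ioi' hf.integrableOn hf.integrableOn, sub_sub_cancel]
  rw [hsplit]
  exact (intervalIntegral.integral_hasDerivAt_right hf.intervalIntegrable
    (hcont.stronglyMeasurableAtFilter _ _) hcont.continuousAt).const_sub _

lemma upperTail_add_eq_setIntegral_comp_add_right (x d : ℝ) :
    upperTail f (x + d) = ∫ t in Ioi x, f (t + d) := by
  have h := (measurePreserving_add_right volume d).setIntegral_preimage_emb
    (MeasurableEquiv.addRight d).measurableEmbedding f (Ioi (x + d))
  have hpre : (fun t => t + d) ⁻¹' Ioi (x + d) = Ioi x := by ext; simp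
  rw [hpre] at h
  exact h.symm

lemma mul_upperTail_add_lt (hf : Integrable f)
    (hlc : ∀ {x t d : ℝ}, x < t → 0 < d → f x * f (t + d) < f (x + d) * f t)
    {d : ℝ} (hd : 0 < d) (x : ℝ) :
    f x * upperTail f (x + d) < f (x + d) * upperTail f x := by
  have hint : IntegrableOn (fun t => f (x + d) * f t) (Ioi x) := hf.integrableOn.const_mul _
  have hint' : IntegrableOn (fun t => f x * f (t + d)) (Ioi x) :=
    (hf.comp_add_right d).integrableOn.const_mul _
  have hgap : 0 < ∫ t in Ioi x, (f (x + d) * f t - f x * f (t + d)) :=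
    setIntegral_Ioi_pos (hint.sub hint') fun t (ht : x < t) => sub_pos.mpr (hlc ht hd)
  rw [integral_sub hint hint', integral_const_mul, integral_const_mul,
    ← upperTail_add_eq_setIntegral_comp_add_right] at hgap
  exact sub_pos.mp hgap

lemma strictAnti_upperTail_add_div_upperTail (hf : Integrable f) (hcont : Continuous f)
    (hpos : ∀ s, 0 < f s)
    (hlc : ∀ {x t d : ℝ}, x < t → 0 < d → f x * f (t + d) < f (x + d) * f t)
    {d : ℝ} (hd : 0 < d) : StrictAnti fun x => upperTail f (x + d) / upperTail f x := by
  apply strictAnti_of_deriv_neg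
  intro x
  have hnum : HasDerivAt (fun x => upperTail f (x + d)) (-f (x + d)) x :=
    (hasDerivAt_upperTail hf hcont (x + d)).comp_add_const x d
  rw [(hnum.fun_div (hasDerivAt_upperTail hf hcont x) (upperTail_pos hf hpos x).ne').deriv]
  have hcross := mul_upperTail_add_lt hf hlc hd x
  have hT := upperTail_pos hf hpos x
  exact div_neg_of_neg_of_pos (by linarith) (by positivity)

end

lemma integrable_exp_neg_sq_div_two : Integrable fun s : ℝ => exp (-(s ^ 2) / 2) := by
  simpa [neg_div, div_eq_inv_mul] using integrable_exp_neg_mul_sq (by norm_num : (0 : ℝ) < 1 / 2)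

lemma integral_exp_neg_sq_div_two : ∫ s, exp (-(s ^ 2) / 2) = √(2 * π) := by
  have h := integral_gaussian (1 / 2)
  rw [show π / (1 / 2) = 2 * π by ring] at h
  simpa [neg_div, div_eq_inv_mul] using h

lemma one_sub_Phi_eq (t : ℝ) :
    1 - Phi t = (√(2 * π))⁻¹ * upperTail (fun s => exp (-(s ^ 2) / 2)) t := by
  have hsplit := intervalIntegral.integral_Iic_add_Ioi (b := t)
    integrable_exp_neg_sq_div_two.integrableOn integrable_exp_neg_sq_div_two.integrableOn
  rw [integral_exp_neg_sq_div_two] at hsplit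
  have hK : √(2 * π) ≠ 0 := by positivity
  rw [Phi, upperTail, eq_inv_mul_iff_mul_eq₀ hK, mul_sub, mul_one, ← mul_assoc,
    mul_inv_cancel₀ hK, one_mul]
  linarith

lemma F_eq_one_sub_upperTail_div (a θ c : ℝ) :
    F a θ c = 1 - upperTail (fun s => exp (-(s ^ 2) / 2)) (a - θ) /
      upperTail (fun s => exp (-(s ^ 2) / 2)) (c - θ) := by
  have hK : (√(2 * π))⁻¹ ≠ 0 := by positivity
  have hT := upperTail_pos integrable_exp_neg_sq_div_two (fun s => exp_pos _) (c - θ)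
  rw [F, show Phi (a - θ) - Phi (c - θ) = (1 - Phi (c - θ)) - (1 - Phi (a - θ)) by ring,
    one_sub_Phi_eq, one_sub_Phi_eq, ← mul_sub, mul_div_mul_left _ _ hK, sub_div, div_self hT.ne']

lemma strictAnti_upperTail_add_div_upperTail_gaussian {d : ℝ} (hd : 0 < d) :
    StrictAnti fun x => upperTail (fun s => exp (-(s ^ 2) / 2)) (x + d) /
      upperTail (fun s => exp (-(s ^ 2) / 2)) x := by
  refine strictAnti_upperTail_add_div_upperTail integrable_exp_neg_sq_div_two (by fun_prop)
    (fun s => exp_pos _) (fun {x t e} hxt he => ?_) hd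
  rw [← exp_add, ← exp_add, exp_lt_exp]
  nlinarith

/-- For every critical value `c` and every `a > c`, the map `θ ↦ F(a; θ, c)` is
strictly decreasing on `ℝ`: if `θ₁ < θ₂` then `F(a; θ₁, c) > F(a; θ₂, c)`. -/
theorem stmt_0 (c a : ℝ) (ha : c < a) :
    ∀ θ₁ θ₂ : ℝ, θ₁ < θ₂ → F a θ₂ c < F a θ₁ c := by
  intro θ₁ θ₂ hθ
  have hratio :=
    strictAnti_upperTail_add_div_upperTail_gaussian (sub_pos.mpr ha) (sub_lt_sub_left hθ c)
  simp only [sub_add_sub_cancel'] at hratio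
  rw [F_eq_one_sub_upperTail_div, F_eq_one_sub_upperTail_div]
  linarith
end

section
/- For every critical value c, every a > c and every p ∈ (0, 1), there exists a unique θ ∈ ℝ such that F(a; θ, c) = p. -/
/-!
With `d = a - c` and `x = c - θ`, `F(a; θ, c) = 1 - (1 - Φ(x + d)) / (1 - Φ(x))`. The standard
normal density satisfies `φ(t + δ) = φ(t) e^{-δt - δ²/2}`, and the factor is decreasing in `t`:
translating by `δ > 0` multiplies the tail beyond `b` by at most `K = e^{-δb - δ²/2}` and the mass
of an interval ending at `b` by strictly more than `K`. Hence the tail ratio is strictly decreasing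
in `x` (so `F` is strictly decreasing in `θ`) and bounded by `e^{-dx - d²/2} → 0`. As `Φ → 0` at
`-∞`, the continuous function `θ ↦ F(a; θ, c)` decreases from `1` to `0`, and the intermediate
value theorem gives the unique solution.
-/

open Filter Set

open MeasureTheory ProbabilityTheory Topology

local notation "φ" => gaussianPDFReal 0 1

lemma gaussianPDFReal_zero_one_apply (s : ℝ) :
    φ s = (Real.sqrt (2 * Real.pi))⁻¹ * Real.exp (-(s ^ 2) / 2) := by
  simp [gaussianPDFReal]

lemma gaussianPDFReal_zero_one_add (t δ : ℝ) :
    φ (t + δ) = φ t * Real.exp (-(δ * t) - δ ^ 2 / 2) := by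
  rw [gaussianPDFReal_zero_one_apply, gaussianPDFReal_zero_one_apply, mul_assoc,
    ← Real.exp_add]
  ring_nf

lemma Phi_eq_integral_Iic (t : ℝ) : Phi t = ∫ s in Iic t, φ s := by
  simp only [Phi, gaussianPDFReal_zero_one_apply, integral_const_mul]

lemma one_sub_Phi_eq_integral_Ioi (t : ℝ) : 1 - Phi t = ∫ s in Ioi t, φ s := by
  rw [← integral_gaussianPDFReal_eq_one 0 one_ne_zero, Phi_eq_integral_Iic,
    ← intervalIntegral.integral_Iic_add_Ioi (integrable_gaussianPDFReal 0 1).integrableOn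
      (integrable_gaussianPDFReal 0 1).integrableOn, add_sub_cancel_left]

lemma Phi_sub_Phi (s t : ℝ) : Phi t - Phi s = ∫ u in s..t, φ u := by
  rw [Phi_eq_integral_Iic, Phi_eq_integral_Iic, intervalIntegral.integral_Iic_sub_Iic
    (integrable_gaussianPDFReal 0 1).integrableOn (integrable_gaussianPDFReal 0 1).integrableOn]

lemma Phi_lt_one (t : ℝ) : Phi t < 1 := by
  rw [← sub_pos, one_sub_Phi_eq_integral_Ioi, setIntegral_pos_iff_support_of_nonneg_ae
    (ae_of_all _ (gaussianPDFReal_nonneg 0 1)) (integrable_gaussianPDFReal 0 1).integrableOn,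
    (eq_univ_of_forall fun s => (gaussianPDFReal_pos 0 1 s one_ne_zero).ne' :
      Function.support φ = univ), univ_inter]
  exact Measure.measure_Ioi_pos _ t

lemma Phi_strictMono : StrictMono Phi := fun s t hst => by
  rw [← sub_pos, Phi_sub_Phi]
  exact intervalIntegral.intervalIntegral_pos_of_pos
    (integrable_gaussianPDFReal 0 1).intervalIntegrable
    (fun u => gaussianPDFReal_pos 0 1 u one_ne_zero) hst

lemma continuous_Phi : Continuous Phi := by
  have h : Phi = fun t => Phi 0 + ∫ u in (0 : ℝ)..t, φ u := by
    ext t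
    rw [← Phi_sub_Phi, add_sub_cancel]
  rw [h]
  exact continuous_const.add (intervalIntegral.continuous_primitive
    (fun _ _ => (integrable_gaussianPDFReal 0 1).intervalIntegrable) 0)

lemma tendsto_Phi_atBot : Tendsto Phi atBot (𝓝 0) := by
  have h := (intervalIntegral_tendsto_integral_Iic 0
    (integrable_gaussianPDFReal 0 1).integrableOn tendsto_id).const_sub (Phi 0)
  rw [← Phi_eq_integral_Iic, sub_self] at h
  exact h.congr fun t => by rw [← Phi_sub_Phi, sub_sub_cancel, id]

lemma one_sub_Phi_add_le (b : ℝ) {δ : ℝ} (hδ : 0 ≤ δ) :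
    1 - Phi (b + δ) ≤ Real.exp (-(δ * b) - δ ^ 2 / 2) * (1 - Phi b) := by
  have h_shift : 1 - Phi (b + δ) = ∫ t in Ioi b, φ (t + δ) := by
    rw [one_sub_Phi_eq_integral_Ioi,
      ← (measurePreserving_add_right volume δ).setIntegral_preimage_emb
        (measurableEmbedding_addRight δ), preimage_add_const_Ioi, add_sub_cancel_right]
  rw [h_shift, one_sub_Phi_eq_integral_Ioi, ← integral_const_mul]
  refine setIntegral_mono_on ((integrable_gaussianPDFReal 0 1).comp_add_right δ).integrableOn
    ((integrable_gaussianPDFReal 0 1).const_mul _).integrableOn measurableSet_Ioi fun t ht => ?_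
  rw [gaussianPDFReal_zero_one_add, mul_comm (Real.exp _)]
  exact mul_le_mul_of_nonneg_left (Real.exp_le_exp.mpr (by gcongr; exact le_of_lt ht))
    (gaussianPDFReal_nonneg 0 1 t)

lemma exp_mul_Phi_sub_Phi_lt {x b δ : ℝ} (hxb : x < b) (hδ : 0 < δ) :
    Real.exp (-(δ * b) - δ ^ 2 / 2) * (Phi b - Phi x) < Phi (b + δ) - Phi (x + δ) := by
  rw [Phi_sub_Phi, Phi_sub_Phi, ← intervalIntegral.integral_comp_add_right,
    ← intervalIntegral.integral_const_mul, ← sub_pos, ← intervalIntegral.integral_sub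
      ((integrable_gaussianPDFReal 0 1).comp_add_right δ).intervalIntegrable
      ((integrable_gaussianPDFReal 0 1).const_mul _).intervalIntegrable]
  refine intervalIntegral.intervalIntegral_pos_of_pos_on
    (((integrable_gaussianPDFReal 0 1).comp_add_right δ).sub
      ((integrable_gaussianPDFReal 0 1).const_mul _)).intervalIntegrable (fun u hu => ?_) hxb
  rw [gaussianPDFReal_zero_one_add, mul_comm (Real.exp (-(δ * b) - _)), ← mul_sub]
  exact mul_pos (gaussianPDFReal_pos 0 1 u one_ne_zero)
    (sub_pos.mpr (Real.exp_lt_exp.mpr (by gcongr; exact hu.2)))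

noncomputable def tailRatio (d x : ℝ) : ℝ := (1 - Phi (x + d)) / (1 - Phi x)

lemma tailRatio_strictAnti {d : ℝ} (hd : 0 < d) : StrictAnti (tailRatio d) := by
  intro x y hxy
  obtain ⟨δ, hδ, rfl⟩ : ∃ δ, 0 < δ ∧ y = x + δ := ⟨y - x, sub_pos.mpr hxy, by ring⟩
  have h_tail := one_sub_Phi_add_le (x + d) hδ.le
  have h_body := exp_mul_Phi_sub_Phi_lt (lt_add_of_pos_right x hd) hδ
  rw [add_right_comm] at h_tail h_body
  have h_mass : 0 < Phi (x + d) - Phi x := sub_pos.mpr (Phi_strictMono (lt_add_of_pos_right x hd))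
  have h_rest : 0 < 1 - Phi (x + d) := sub_pos.mpr (Phi_lt_one _)
  rw [tailRatio, tailRatio,
    div_lt_div_iff₀ (sub_pos.mpr (Phi_lt_one _)) (sub_pos.mpr (Phi_lt_one _))]
  linarith [mul_le_mul_of_nonneg_right h_tail h_mass.le, mul_lt_mul_of_pos_right h_body h_rest]

lemma tendsto_tailRatio_atTop {d : ℝ} (hd : 0 < d) :
    Tendsto (tailRatio d) atTop (𝓝 0) := by
  have h_exp : Tendsto (fun x => Real.exp (-(d * x) - d ^ 2 / 2)) atTop (𝓝 0) :=
    Real.tendsto_exp_atBot.comp (tendsto_atBot_add_const_right _ _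
      (tendsto_neg_atTop_atBot.comp (tendsto_id.const_mul_atTop hd)))
  refine tendsto_of_tendsto_of_tendsto_of_le_of_le tendsto_const_nhds h_exp (fun x => ?_)
    (fun x => ?_)
  · exact div_nonneg (sub_nonneg.mpr (Phi_lt_one _).le) (sub_nonneg.mpr (Phi_lt_one _).le)
  · exact (div_le_iff₀ (sub_pos.mpr (Phi_lt_one x))).mpr (one_sub_Phi_add_le x hd.le)

lemma F_eq_one_sub_tailRatio (a θ c : ℝ) : F a θ c = 1 - tailRatio (a - c) (c - θ) := by
  rw [F, tailRatio, show c - θ + (a - c) = a - θ by ring]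
  field_simp [(sub_pos.mpr (Phi_lt_one (c - θ))).ne']
  ring

lemma strictAnti_F {a c : ℝ} (hca : c < a) : StrictAnti fun θ => F a θ c := by
  intro θ θ' hθ
  have := tailRatio_strictAnti (sub_pos.mpr hca) (sub_lt_sub_left hθ c)
  simp only [F_eq_one_sub_tailRatio]
  linarith

lemma continuous_F (a c : ℝ) : Continuous fun θ => F a θ c := by
  have hPhi : ∀ b, Continuous fun θ => Phi (b - θ) := fun b =>
    continuous_Phi.comp (continuous_sub_left b)
  exact ((hPhi a).sub (hPhi c)).div (continuous_const.sub (hPhi c))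
    fun θ => (sub_pos.mpr (Phi_lt_one _)).ne'

lemma tendsto_F_atTop (a c : ℝ) : Tendsto (fun θ => F a θ c) atTop (𝓝 0) := by
  have hPhi : ∀ b, Tendsto (fun θ => Phi (b - θ)) atTop (𝓝 0) := fun b =>
    tendsto_Phi_atBot.comp ((tendsto_atBot_add_const_left _ b tendsto_neg_atTop_atBot).congr
      fun θ => (sub_eq_add_neg b θ).symm)
  have h := ((hPhi a).sub (hPhi c)).div ((hPhi c).const_sub 1) (by norm_num)
  rw [sub_zero, sub_zero, zero_div] at h
  exact h

lemma tendsto_F_atBot {a c : ℝ} (hca : c < a) : Tendsto (fun θ => F a θ c) atBot (𝓝 1) := by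
  have h := ((tendsto_tailRatio_atTop (sub_pos.mpr hca)).comp
    ((tendsto_atTop_add_const_left _ c tendsto_neg_atBot_atTop).congr
      fun θ => (sub_eq_add_neg c θ).symm)).const_sub 1
  rw [sub_zero] at h
  exact h.congr fun θ => (F_eq_one_sub_tailRatio a θ c).symm

/-- For every critical value `c`, every `a > c` and every `p ∈ (0,1)`, there is a
unique `θ ∈ ℝ` with `F(a; θ, c) = p`. -/
theorem stmt_1 (c a p : ℝ) (ha : c < a) (hp : p ∈ Set.Ioo (0 : ℝ) 1) :
    ∃! θ : ℝ, F a θ c = p := by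
  obtain ⟨θ, hθ⟩ : p ∈ range fun θ => F a θ c :=
    mem_range_of_exists_le_of_exists_ge (continuous_F a c)
      (((tendsto_F_atTop a c).eventually (eventually_lt_nhds hp.1)).exists.imp fun _ => le_of_lt)
      (((tendsto_F_atBot ha).eventually (eventually_gt_nhds hp.2)).exists.imp fun _ => le_of_lt)
  exact ⟨θ, hθ, fun θ' hθ' => (strictAnti_F ha).injective (hθ'.trans hθ.symm)⟩
end

section
/- (Probability integral transform, conditional version.) Let X be distributed according to the Gaussian measure on ℝ with mean θ and variance 1, conditioned on the event {X ≥ c}. Then F(X; θ, c) is uniformly distributed on [0, 1]: for every p ∈ [0, 1], the conditional probability of the event {x ≥ c : F(x; θ, c) ≤ p} equals p. -/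
open Filter Set MeasureTheory ProbabilityTheory

/-! The distribution function `G` of `N(θ, 1)` is `x ↦ Φ(x − θ)`; it is continuous (no atoms) and
strictly increasing (positive density). For `x ≥ c`, `F(x; θ, c) ≤ p` iff `G x ≤ q := G c + p (1 − G c)`.
For `q < 1` the intermediate value theorem gives `a ≥ c` with `G a = q`, so the event is `[c, a]`, of
mass `q − G c = p (1 − G c)`, while `[c, ∞)` has mass `1 − G c`. -/

namespace ProbabilityTheory

variable (μ : Measure ℝ)

lemma cdf_lt_one (hG : StrictMono (cdf μ)) (x : ℝ) : cdf μ x < 1 :=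
  (hG (lt_add_one x)).trans_le (cdf_le_one μ _)

variable [IsProbabilityMeasure μ]

/-- The distribution function of `μ` conditioned on `[c, ∞)`; for `μ = N(θ, 1)` it is `F(·; θ, c)`. -/
noncomputable def truncCDF (c x : ℝ) : ℝ :=
  (cdf μ x - cdf μ c) / (1 - cdf μ c)

lemma leftLim_cdf [NullSingletonClass μ] (x : ℝ) : Function.leftLim (cdf μ) x = cdf μ x := by
  have h := (cdf μ).measure_singleton x
  rw [measure_cdf, measure_singleton, eq_comm, ENNReal.ofReal_eq_zero, sub_nonpos] at h
  exact le_antisymm ((monotone_cdf μ).leftLim_le le_rfl) h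

lemma continuous_cdf [NullSingletonClass μ] : Continuous (cdf μ) :=
  continuous_iff_continuousAt.2 fun x => continuousAt_iff_continuous_left_right.2
    ⟨continuousWithinAt_Iio_iff_Iic.1 ((monotone_cdf μ).continuousWithinAt_Iio_iff_leftLim_eq.2
      (leftLim_cdf μ x)), (cdf μ).right_continuous x⟩

lemma strictMono_cdf (hμ : volume ≪ μ) : StrictMono (cdf μ) := by
  intro a b hab
  have hpos : μ (Ioc a b) ≠ 0 := fun h => hab.not_ge <| by
    simpa [Real.volume_Ioc] using hμ h
  rw [← measure_cdf μ, StieltjesFunction.measure_Ioc, Ne, ENNReal.ofReal_eq_zero, not_le,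
    sub_pos] at hpos
  exact hpos

lemma exists_cdf_eq {c q : ℝ} [NullSingletonClass μ] (hcq : cdf μ c ≤ q) (hq : q < 1) :
    ∃ a, c ≤ a ∧ cdf μ a = q := by
  obtain ⟨b, hb⟩ := ((tendsto_cdf_atTop μ).eventually (eventually_gt_nhds hq)).exists
  obtain ⟨a, ha, rfl⟩ := intermediate_value_Icc (le_max_right b c)
    (continuous_cdf μ).continuousOn ⟨hcq, hb.le.trans (monotone_cdf μ (le_max_left b c))⟩
  exact ⟨a, ha.1, rfl⟩

lemma measure_Ici_eq_one_sub_cdf [NullSingletonClass μ] (c : ℝ) :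
    μ (Ici c) = ENNReal.ofReal (1 - cdf μ c) := by
  nth_rw 1 [← measure_cdf μ]
  rw [StieltjesFunction.measure_Ici _ (tendsto_cdf_atTop μ), leftLim_cdf]

lemma measure_ge_and_cdf_le [NullSingletonClass μ] (hG : StrictMono (cdf μ)) {c q : ℝ}
    (hcq : cdf μ c ≤ q) (hq : q ≤ 1) :
    μ {x | c ≤ x ∧ cdf μ x ≤ q} = ENNReal.ofReal (q - cdf μ c) := by
  rcases hq.lt_or_eq with hq | rfl
  · obtain ⟨a, hca, rfl⟩ := exists_cdf_eq μ hcq hq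
    have hset : {x | c ≤ x ∧ cdf μ x ≤ cdf μ a} = Icc c a := by
      ext x
      simp only [mem_ofPred_eq, mem_Icc, hG.le_iff_le]
    nth_rw 1 [hset, ← measure_cdf μ]
    rw [StieltjesFunction.measure_Icc, leftLim_cdf]
  · have hset : {x | c ≤ x ∧ cdf μ x ≤ 1} = Ici c := by
      ext x
      simp [cdf_le_one μ x]
    rw [hset, measure_Ici_eq_one_sub_cdf]

theorem cond_truncCDF_le [NullSingletonClass μ] (hG : StrictMono (cdf μ)) (c : ℝ) {p : ℝ}
    (hp0 : 0 ≤ p) (hp1 : p ≤ 1) :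
    μ[|Ici c] {x | c ≤ x ∧ truncCDF μ c x ≤ p} = ENNReal.ofReal p := by
  have hD : 0 < 1 - cdf μ c := sub_pos.2 (cdf_lt_one μ hG c)
  have hset : Ici c ∩ {x | c ≤ x ∧ truncCDF μ c x ≤ p} =
      {x | c ≤ x ∧ cdf μ x ≤ cdf μ c + p * (1 - cdf μ c)} := by
    ext x
    simp only [mem_inter_iff, mem_Ici, mem_ofPred_eq, truncCDF, div_le_iff₀ hD, sub_le_iff_le_add']
    tauto
  rw [cond_apply measurableSet_Ici, hset,
    measure_ge_and_cdf_le μ hG (le_add_of_nonneg_right (by positivity)) (by nlinarith),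
    add_sub_cancel_left, measure_Ici_eq_one_sub_cdf, ENNReal.ofReal_mul hp0, mul_left_comm,
    ENNReal.inv_mul_cancel (ENNReal.ofReal_pos.2 hD).ne' ENNReal.ofReal_ne_top, mul_one]

end ProbabilityTheory

lemma gaussianReal_zero_one_Iic (t : ℝ) : gaussianReal 0 1 (Iic t) = ENNReal.ofReal (Phi t) := by
  rw [gaussianReal_apply_eq_integral 0 one_ne_zero, Phi, ← integral_const_mul]
  congr 1
  refine setIntegral_congr_fun measurableSet_Iic fun x _ => ?_
  simp [gaussianPDFReal]

lemma cdf_gaussianReal_one (θ x : ℝ) : cdf (gaussianReal θ 1) x = Phi (x - θ) := by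
  have hmap := gaussianReal_map_add_const (μ := 0) (v := 1) θ
  rw [zero_add] at hmap
  have hpre : (· + θ) ⁻¹' Iic x = Iic (x - θ) := by
    ext y
    simp [le_sub_iff_add_le]
  rw [cdf_eq_real, measureReal_def, ← hmap, Measure.map_apply (measurable_add_const θ)
    measurableSet_Iic, hpre, gaussianReal_zero_one_Iic,
    ENNReal.toReal_ofReal (by unfold Phi; positivity)]

lemma F_eq_truncCDF (x θ c : ℝ) : F x θ c = truncCDF (gaussianReal θ 1) c x := by
  simp only [F, truncCDF, cdf_gaussianReal_one]

/-- (Probability integral transform, conditional version.) Let `X ~ N(θ, 1)`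
conditioned on `{X ≥ c}`. Then `F(X; θ, c)` is uniformly distributed on `[0,1]`:
for every `p ∈ [0,1]`, the conditional probability of `{x ≥ c : F(x; θ, c) ≤ p}`
equals `p`. -/
theorem stmt_12 (θ c : ℝ) :
    ∀ p ∈ Set.Icc (0 : ℝ) 1,
      (gaussianReal θ 1)[|{x : ℝ | c ≤ x}] {x : ℝ | c ≤ x ∧ F x θ c ≤ p} =
        ENNReal.ofReal p := by
  rintro p ⟨hp0, hp1⟩
  simp only [F_eq_truncCDF]
  have := nullSingletonClass_gaussianReal (μ := θ) one_ne_zero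
  exact cond_truncCDF_le _ (strictMono_cdf _ (gaussianReal_absolutelyContinuous' θ one_ne_zero))
    c hp0 hp1
end

section
/- (Two-sided conditional distribution function.) Let X be distributed according to the Gaussian measure on ℝ with mean θ and variance 1, and let c > 0. Then the event {|X| ≥ c} has positive probability Φ(−c − θ) + Φ(θ − c), and for every a ∈ ℝ, P(X ≤ a ∣ |X| ≥ c) = [min(Φ(a − θ), Φ(−c − θ)) + 1_{a > c}·(Φ(a − θ) − Φ(c − θ))] / (Φ(−c − θ) + Φ(θ − c)), where 1_{a > c} equals 1 if a > c and 0 otherwise. -/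
open Filter Set MeasureTheory ProbabilityTheory

lemma pdf01 (x : ℝ) : gaussianPDFReal 0 1 x = (Real.sqrt (2 * Real.pi))⁻¹ * Real.exp (-(x ^ 2) / 2) := by
  simp [gaussianPDFReal]

lemma Phi_eq (t : ℝ) : Phi t = ∫ x in Iic t, gaussianPDFReal 0 1 x := by
  simp_rw [pdf01, integral_const_mul, Phi]

lemma intOn (θ : ℝ) (s : Set ℝ) : IntegrableOn (gaussianPDFReal θ 1) s :=
  (integrable_gaussianPDFReal θ 1).integrableOn

lemma pdf_shift (θ x : ℝ) : gaussianPDFReal θ 1 x = gaussianPDFReal 0 1 (x - θ) := by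
  rw [gaussianPDFReal_sub, zero_add]

lemma G_Iic (θ a : ℝ) : ∫ x in Iic a, gaussianPDFReal θ 1 x = Phi (a - θ) := by
  rw [Phi_eq]
  have h := (measurePreserving_sub_right (volume : Measure ℝ) θ).setIntegral_preimage_emb
    (MeasurableEquiv.subRight θ).measurableEmbedding (gaussianPDFReal 0 1) (Iic (a - θ))
  have hpre : ((· - θ) : ℝ → ℝ) ⁻¹' Iic (a - θ) = Iic a := by
    ext x; simp [sub_le_sub_iff_right]
  rw [hpre] at h
  rw [← h]
  exact setIntegral_congr_fun measurableSet_Iic fun x _ => pdf_shift θ x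

lemma Phi_mono : Monotone Phi := by
  intro s t hst
  rw [Phi_eq, Phi_eq, ← Iic_union_Ioc_eq_Iic hst,
    setIntegral_union (Iic_disjoint_Ioc le_rfl) measurableSet_Ioc (intOn 0 _) (intOn 0 _)]
  have : 0 ≤ ∫ x in Ioc s t, gaussianPDFReal 0 1 x :=
    setIntegral_nonneg measurableSet_Ioc fun x _ => gaussianPDFReal_nonneg 0 1 x
  linarith

lemma G_total (θ : ℝ) : ∫ x, gaussianPDFReal θ 1 x = 1 :=
  integral_gaussianPDFReal_eq_one θ one_ne_zero

lemma G_Ioi (θ a : ℝ) : ∫ x in Ioi a, gaussianPDFReal θ 1 x = 1 - Phi (a - θ) := by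
  have h : (∫ x in Iic a, gaussianPDFReal θ 1 x) + ∫ x in Ioi a, gaussianPDFReal θ 1 x = 1 := by
    rw [← setIntegral_union (Iic_disjoint_Ioi le_rfl) measurableSet_Ioi (intOn θ _) (intOn θ _),
      Iic_union_Ioi, ← G_total θ, setIntegral_univ]
  rw [G_Iic] at h; linarith

lemma G_Ici (θ a : ℝ) : ∫ x in Ici a, gaussianPDFReal θ 1 x = 1 - Phi (a - θ) := by
  rw [integral_Ici_eq_integral_Ioi, G_Ioi]

lemma pdf_even (θ x : ℝ) : gaussianPDFReal θ 1 (-x) = gaussianPDFReal (-θ) 1 x := by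
  simp only [gaussianPDFReal]
  congr 2
  ring

lemma Phi_neg (t : ℝ) : Phi (-t) = 1 - Phi t := by
  have h := (Measure.measurePreserving_neg (volume : Measure ℝ)).setIntegral_preimage_emb
    (MeasurableEquiv.neg ℝ).measurableEmbedding (gaussianPDFReal 0 1) (Iic (-t))
  have hpre : (Neg.neg : ℝ → ℝ) ⁻¹' Iic (-t) = Ici t := by
    ext x; simp [neg_le_neg_iff, le_neg]
  rw [hpre] at h
  have hcong : ∫ x in Ici t, gaussianPDFReal 0 1 (-x) = ∫ x in Ici t, gaussianPDFReal 0 1 x :=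
    setIntegral_congr_fun measurableSet_Ici fun x _ => by rw [pdf_even, neg_zero]
  have := Phi_eq (-t)
  rw [← h, hcong, G_Ici] at this
  simpa using this

lemma Phi_pos (t : ℝ) : 0 < Phi t := by
  rw [Phi_eq]
  rw [setIntegral_pos_iff_support_of_nonneg_ae
    (ae_of_all _ fun x => gaussianPDFReal_nonneg 0 1 x) (intOn 0 _)]
  have hsupp : Function.support (gaussianPDFReal 0 1) = univ := by
    ext x; simp [(gaussianPDFReal_pos 0 1 x one_ne_zero).ne']
  rw [hsupp, univ_inter]
  simp

lemma G_Ioc (θ a b : ℝ) (hab : a ≤ b) :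
    ∫ x in Ioc a b, gaussianPDFReal θ 1 x = Phi (b - θ) - Phi (a - θ) := by
  have h : (∫ x in Iic a, gaussianPDFReal θ 1 x) + ∫ x in Ioc a b, gaussianPDFReal θ 1 x
      = ∫ x in Iic b, gaussianPDFReal θ 1 x := by
    rw [← setIntegral_union (Iic_disjoint_Ioc le_rfl) measurableSet_Ioc (intOn θ _) (intOn θ _),
      Iic_union_Ioc_eq_Iic hab]
  rw [G_Iic, G_Iic] at h; linarith

lemma G_Icc (θ a b : ℝ) (hab : a ≤ b) :
    ∫ x in Icc a b, gaussianPDFReal θ 1 x = Phi (b - θ) - Phi (a - θ) := by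
  rw [integral_Icc_eq_integral_Ioc, G_Ioc θ a b hab]

lemma event_eq (c : ℝ) : {x : ℝ | c ≤ |x|} = Iic (-c) ∪ Ici c := by
  ext x
  simp only [mem_setOf_eq, le_abs, mem_union, mem_Iic, mem_Ici, le_neg]
  tauto

/-- (Two-sided conditional distribution function.) Let `X ~ N(θ, 1)` and `c > 0`.
The event `{|X| ≥ c}` has positive probability `Φ(−c − θ) + Φ(θ − c)`, and for
every `a`, `P(X ≤ a ∣ |X| ≥ c)` equals
`[min(Φ(a − θ), Φ(−c − θ)) + 1_{a > c}·(Φ(a − θ) − Φ(c − θ))] / (Φ(−c − θ) + Φ(θ − c))`. -/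
theorem stmt_14 (θ c : ℝ) (hc : 0 < c) :
    gaussianReal θ 1 {x : ℝ | c ≤ |x|} =
        ENNReal.ofReal (Phi (-c - θ) + Phi (θ - c)) ∧
    0 < gaussianReal θ 1 {x : ℝ | c ≤ |x|} ∧
    ∀ a : ℝ,
      (gaussianReal θ 1)[|{x : ℝ | c ≤ |x|}] {x : ℝ | x ≤ a} =
        ENNReal.ofReal
          ((min (Phi (a - θ)) (Phi (-c - θ)) +
              (if c < a then Phi (a - θ) - Phi (c - θ) else 0)) /
            (Phi (-c - θ) + Phi (θ - c))) := by
  have hneg : -c < c := by linarith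
  have hdisj : Disjoint (Iic (-c)) (Ici c) := Iic_disjoint_Ici.mpr (not_le.mpr hneg)
  have hGE : ∫ x in {x : ℝ | c ≤ |x|}, gaussianPDFReal θ 1 x = Phi (-c - θ) + Phi (θ - c) := by
    rw [event_eq, setIntegral_union hdisj measurableSet_Ici (intOn θ _) (intOn θ _),
      G_Iic, G_Ici]
    have : 1 - Phi (c - θ) = Phi (θ - c) := by
      have := Phi_neg (c - θ); rw [neg_sub] at this; linarith
    rw [this]
  have hD : 0 < Phi (-c - θ) + Phi (θ - c) := by
    have := Phi_pos (-c - θ); have := Phi_pos (θ - c); linarith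
  have h1 : gaussianReal θ 1 {x : ℝ | c ≤ |x|} = ENNReal.ofReal (Phi (-c - θ) + Phi (θ - c)) := by
    rw [gaussianReal_apply_eq_integral θ one_ne_zero, hGE]
  refine ⟨h1, ?_, ?_⟩
  · rw [h1]; exact ENNReal.ofReal_pos.mpr hD
  · intro a
    have hEmeas : MeasurableSet {x : ℝ | c ≤ |x|} := by
      rw [event_eq]; exact measurableSet_Iic.union measurableSet_Ici
    rw [cond_apply hEmeas]
    have hIic : {x : ℝ | x ≤ a} = Iic a := rfl
    have hinter : {x : ℝ | c ≤ |x|} ∩ {x : ℝ | x ≤ a} = Iic (min (-c) a) ∪ Icc c a := by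
      rw [event_eq, hIic, union_inter_distrib_right, Iic_inter_Iic, Ici_inter_Iic]
    set N : ℝ := min (Phi (a - θ)) (Phi (-c - θ)) +
        (if c < a then Phi (a - θ) - Phi (c - θ) else 0) with hN
    have hNval : ∫ x in {x : ℝ | c ≤ |x|} ∩ {x : ℝ | x ≤ a}, gaussianPDFReal θ 1 x = N := by
      rw [hinter]
      have hdisj2 : Disjoint (Iic (min (-c) a)) (Icc c a) := by
        refine Disjoint.mono_left ?_ (hdisj.mono_right Icc_subset_Ici_self)
        exact Iic_subset_Iic.mpr (min_le_left _ _)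
      rw [setIntegral_union hdisj2 measurableSet_Icc (intOn θ _) (intOn θ _), G_Iic]
      have hmin : Phi (min (-c) a - θ) = min (Phi (a - θ)) (Phi (-c - θ)) := by
        have hm : Monotone fun x : ℝ => Phi (x - θ) :=
          Phi_mono.comp fun x y h => by simpa using sub_le_sub_right h θ
        have := hm.map_min (a := -c) (b := a)
        simpa [min_comm] using this
      rw [hmin, hN]
      congr 1
      by_cases hca : c < a
      · rw [if_pos hca, G_Icc θ c a hca.le]
      · rw [if_neg hca]
        have hnull : Icc c a ⊆ ({c} : Set ℝ) := by
          intro x hx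
          have : x = c := le_antisymm (hx.2.trans (not_lt.mp hca)) hx.1
          simp [this]
        have : volume (Icc c a) = 0 :=
          measure_mono_null hnull (measure_singleton c)
        rw [Measure.restrict_eq_zero.mpr this, integral_zero_measure]
    have hmu : gaussianReal θ 1 ({x : ℝ | c ≤ |x|} ∩ {x : ℝ | x ≤ a}) = ENNReal.ofReal N := by
      rw [gaussianReal_apply_eq_integral θ one_ne_zero, hNval]
    rw [h1, hmu, ENNReal.ofReal_div_of_pos hD, div_eq_mul_inv, mul_comm]
end
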